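/- arXiv:1810.09266 — 3 statements merged into one kernel-verified Lean document; each statement's English description precedes it below -/
import Mathlib

section
/- Let X be a set and let f_n : X → [0,∞), n ∈ ℕ, be a sequence of non-negative functions on X such that there exist constants α, β, C > 0 with ∑_{n=1}^∞ f_n(x) · R^{αn+β} e^{-αR} / (n!^α · n^{β−α/2+1/2}) ≤ C for every x ∈ X and every R > 0. Then there exists B > 0 such that (1/m) ∑_{n=1}^m f_n(x) ≤ B for every x ∈ X and every m ∈ ℕ. -/
/-!
At radius `R = m`, every index `n` with `m - √m ≤ n ≤ m` carries weight at least `e^{-2α} / √m`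
in the series: this follows from Stirling's upper bound `n! ≤ e √n (n / e)^n` together with
`log (m / n) ≥ 1 - n / m`. Hence the series bound gives `∑ f_n ≤ C e^{2α} √m` over that window.
The window has `⌊√m⌋ + 1 ≥ √m` indices, so peeling such windows off `[1, m]` from the top
yields `∑_{n ≤ m} f_n ≤ C e^{2α} m`.
-/

open Real Finset
open scoped Nat

theorem Stirling.log_factorial_le_stirling {n : ℕ} (hn : n ≠ 0) :
    log n ! ≤ n * log n - n + log n / 2 + 1 := by
  obtain ⟨k, rfl⟩ := Nat.exists_eq_add_one_of_ne_zero hn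
  have hk : (0 : ℝ) < (k + 1 : ℕ) := by positivity
  have h_le_one : log (stirlingSeq (k + 1)) ≤ log (stirlingSeq 1) :=
    log_stirlingSeq'_antitone (Nat.zero_le k)
  rw [log_stirlingSeq_formula, log_mul two_ne_zero hk.ne', log_div hk.ne' (exp_pos 1).ne',
    stirlingSeq_one, log_div (exp_pos 1).ne' (by positivity), log_exp,
    log_sqrt zero_le_two] at h_le_one
  linarith

noncomputable def powerPoissonWeight (α β R : ℝ) (n : ℕ) : ℝ :=
  R ^ (α * n + β) * exp (-α * R) / ((n ! : ℝ) ^ α * (n : ℝ) ^ (β - α / 2 + 1 / 2))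

theorem powerPoissonWeight_nonneg (α β : ℝ) {R : ℝ} (hR : 0 ≤ R) (n : ℕ) :
    0 ≤ powerPoissonWeight α β R n := by
  unfold powerPoissonWeight
  positivity

theorem exp_neg_two_mul_div_sqrt_le_powerPoissonWeight {α β R : ℝ} (hα : 0 < α) (hβ : 0 < β)
    {n : ℕ} (hn : n ≠ 0) (hnR : n ≤ R) (hR : (R - n) ^ 2 ≤ R) :
    exp (-(2 * α)) / √R ≤ powerPoissonWeight α β R n := by
  have hn0 : (0 : ℝ) < n := by positivity
  have hR0 : 0 < R := hn0.trans_le hnR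
  have hfac : (0 : ℝ) < n ! := by positivity
  have hlog_le : log n ≤ log R := log_le_log hn0 hnR
  -- `log (R / n) ≥ 1 - n / R`, and `(R - n)² ≤ R` turns `n (1 - n / R)` into `R - n - 1`
  have hgain : R - n - 1 ≤ n * (log R - log n) := by
    have h := log_le_sub_one_of_pos (div_pos hn0 hR0)
    rw [log_div hn0.ne' hR0.ne'] at h
    have hslack : n * (1 - n / R) - (R - n - 1) = (R - (R - n) ^ 2) / R := by
      field_simp
      ring
    have hslack_nonneg := div_nonneg (sub_nonneg.2 hR) hR0.le
    nlinarith
  unfold powerPoissonWeight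
  rw [← log_le_log_iff (by positivity) (by positivity), log_div (by positivity) (by positivity),
    log_div (by positivity) (by positivity), log_mul (by positivity) (by positivity),
    log_mul (by positivity) (by positivity), log_exp, log_exp, log_sqrt hR0.le, log_rpow hR0,
    log_rpow hfac, log_rpow hn0]
  have hstirling := mul_le_mul_of_nonneg_left (Stirling.log_factorial_le_stirling hn) hα.le
  nlinarith [mul_le_mul_of_nonneg_left hgain hα.le, mul_nonneg hβ.le (sub_nonneg.2 hlog_le)]

theorem sum_Ioc_le_mul_of_forall_exists_sum_Ioc_le {a : ℕ → ℝ} {K : ℝ}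
    (h : ∀ m, 0 < m → ∃ j < m, ∑ n ∈ Ioc j m, a n ≤ K * (m - j)) (m : ℕ) :
    ∑ n ∈ Ioc 0 m, a n ≤ K * m := by
  induction m using Nat.strong_induction_on with
  | _ m ih =>
    rcases Nat.eq_zero_or_pos m with rfl | hm
    · simp
    obtain ⟨j, hjm, hj⟩ := h m hm
    rw [← sum_Ioc_consecutive _ (Nat.zero_le j) hjm.le]
    linarith [ih j hjm]

theorem sum_Ioc_sqrt_window_le {a : ℕ → ℝ} (ha : ∀ n, 0 ≤ a n) {α β C : ℝ} (hα : 0 < α)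
    (hβ : 0 < β) {m : ℕ} (hm : 0 < m)
    (hs : Summable fun n : ℕ => a (n + 1) * powerPoissonWeight α β m (n + 1))
    (hC : ∑' n : ℕ, a (n + 1) * powerPoissonWeight α β m (n + 1) ≤ C) :
    ∑ n ∈ Ioc (m - Nat.sqrt m - 1) m, a n ≤ C * exp (2 * α) * √m := by
  set j := m - Nat.sqrt m - 1
  have hm0 : (0 : ℝ) < m := by positivity
  have hw : ∀ n ∈ Ioc j m, exp (-(2 * α)) / √m ≤ powerPoissonWeight α β m n := by
    intro n hn
    rw [mem_Ioc] at hn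
    have hdist : ((m - n : ℕ) : ℝ) ^ 2 ≤ m := by
      exact_mod_cast (Nat.pow_le_pow_left (by omega : m - n ≤ Nat.sqrt m) 2).trans
        (Nat.sqrt_le' m)
    refine exp_neg_two_mul_div_sqrt_le_powerPoissonWeight hα hβ (by omega)
      (by exact_mod_cast hn.2) ?_
    rwa [Nat.cast_sub hn.2] at hdist
  have hwindow : ∑ n ∈ Ioc j m, a n * powerPoissonWeight α β m n ≤ C := by
    rw [← Ico_add_one_add_one_eq_Ioc, ← sum_Ico_add' (fun n ↦ a n * powerPoissonWeight α β m n)]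
    refine (hs.sum_le_tsum _ fun n _ ↦ ?_).trans hC
    exact mul_nonneg (ha _) (powerPoissonWeight_nonneg α β hm0.le _)
  have hlower : (∑ n ∈ Ioc j m, a n) * (exp (-(2 * α)) / √m) ≤ C := by
    rw [sum_mul]
    exact (sum_le_sum fun n hn ↦ mul_le_mul_of_nonneg_left (hw n hn) (ha n)).trans hwindow
  rwa [← le_div_iff₀ (by positivity), div_div_eq_mul_div, exp_neg, div_inv_eq_mul,
    mul_right_comm] at hlower

theorem sqrt_le_sub_sqrt_sub_one {m : ℕ} (hm : 0 < m) :
    √(m : ℝ) ≤ m - (m - Nat.sqrt m - 1 : ℕ) := by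
  have hwidth : m - (m - Nat.sqrt m - 1) = min m (Nat.sqrt m + 1) := by omega
  rw [← Nat.cast_sub (by omega : m - Nat.sqrt m - 1 ≤ m), hwidth, Nat.cast_min, Nat.cast_add_one]
  exact le_min (sqrt_le_self_iff.2 (Or.inr (by exact_mod_cast hm))) real_sqrt_le_nat_sqrt_succ

/-- Lemma `keyl`. -/
theorem stmt0 {X : Type*} (f : ℕ → X → ℝ) (hpos : ∀ n x, 0 ≤ f n x)
    (α β C : ℝ) (hα : 0 < α) (hβ : 0 < β) (hC : 0 < C)
    (hsummable : ∀ x : X, ∀ R : ℝ, 0 < R →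
      Summable (fun n : ℕ => f (n + 1) x *
        (R ^ (α * (n + 1) + β) * Real.exp (-α * R)) /
        ((Nat.factorial (n + 1) : ℝ) ^ α * ((n : ℝ) + 1) ^ (β - α / 2 + 1 / 2))))
    (hsum : ∀ x : X, ∀ R : ℝ, 0 < R →
      (∑' n : ℕ, f (n + 1) x *
        (R ^ (α * (n + 1) + β) * Real.exp (-α * R)) /
        ((Nat.factorial (n + 1) : ℝ) ^ α * ((n : ℝ) + 1) ^ (β - α / 2 + 1 / 2))) ≤ C) :
    ∃ B : ℝ, 0 < B ∧ ∀ x : X, ∀ m : ℕ,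
      (1 / (m : ℝ)) * ∑ n ∈ Finset.Icc 1 m, f n x ≤ B := by
  have hterm (x : X) (R : ℝ) : (fun n : ℕ => f (n + 1) x *
      (R ^ (α * (n + 1) + β) * Real.exp (-α * R)) /
      ((Nat.factorial (n + 1) : ℝ) ^ α * ((n : ℝ) + 1) ^ (β - α / 2 + 1 / 2))) =
      fun n ↦ f (n + 1) x * powerPoissonWeight α β R (n + 1) := by
    funext n
    simp only [powerPoissonWeight, Nat.cast_add_one, mul_div_assoc]
  have hwindow (x : X) (m : ℕ) (hm : 0 < m) :
      ∃ j < m, ∑ n ∈ Ioc j m, f n x ≤ C * exp (2 * α) * (m - j) := by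
    have hR : (0 : ℝ) < m := by positivity
    refine ⟨m - Nat.sqrt m - 1, by omega, ?_⟩
    refine (sum_Ioc_sqrt_window_le (hpos · x) hα hβ hm (hterm x m ▸ hsummable x m hR)
      (hterm x m ▸ hsum x m hR)).trans ?_
    gcongr
    exact sqrt_le_sub_sqrt_sub_one hm
  refine ⟨C * exp (2 * α), by positivity, fun x m ↦ ?_⟩
  rcases Nat.eq_zero_or_pos m with rfl | hm
  · simp only [Nat.cast_zero, div_zero, zero_mul]
    positivity
  have hlinear := sum_Ioc_le_mul_of_forall_exists_sum_Ioc_le (hwindow x) m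
  rw [← Icc_add_one_left_eq_Ioc, zero_add] at hlinear
  rw [one_div, inv_mul_le_iff₀ (by positivity), mul_comm]
  exact hlinear
end

section
/- For any function φ : (0,∞) → (0,∞) with φ(r) → ∞ as r → ∞, there exists an entire function f : ℂ → ℂ that is a distributionally irregular vector for the differentiation operator D : f ↦ f′ on the space H(ℂ) of entire functions, and that satisfies M_∞(f, r) ≤ φ(r) · e^r for all sufficiently large r > 0. -/
open Filter

/-- Upper density of a set of natural numbers. -/
noncomputable def udens (A : Set ℕ) : ℝ :=
  Filter.limsup (fun n : ℕ => ((A ∩ Set.Icc 1 n).ncard : ℝ) / n) Filter.atTop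

/-- The average `L^p`-norm of an entire function on the circle of radius `r`. -/
noncomputable def Mp (p : ℝ) (f : ℂ → ℂ) (r : ℝ) : ℝ :=
  ((1 / (2 * Real.pi)) * ∫ t in (0 : ℝ)..(2 * Real.pi),
    ‖f (r * Complex.exp (Complex.I * t))‖ ^ p) ^ (1 / p)

/-- `f` is a distributionally irregular vector for the differentiation operator `D`
on `H(ℂ)`: along a set of upper density one the iterated derivatives tend to `0`
locally uniformly, and along a set of upper density one some sup-seminorm of the
iterated derivatives tends to infinity. -/
def DDistIrregular (f : ℂ → ℂ) : Prop :=
  (∃ A : Set ℕ, udens A = 1 ∧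
    TendstoLocallyUniformly (fun (n : ℕ) (z : ℂ) => iteratedDeriv n f z) (fun _ => 0)
      (atTop ⊓ 𝓟 A)) ∧
  (∃ m : ℕ, ∃ B : Set ℕ, udens B = 1 ∧
    Tendsto (fun n : ℕ =>
        sSup ((fun z => ‖iteratedDeriv n f z‖) '' Metric.closedBall (0 : ℂ) m))
      (atTop ⊓ 𝓟 B) atTop)


/-- The sup-norm of an entire function on the circle of radius `r`. -/
noncomputable def Minf (f : ℂ → ℂ) (r : ℝ) : ℝ :=
  sSup ((fun z => ‖f z‖) '' Metric.sphere (0 : ℂ) r)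

/-!
Take `f = ∑ cⱼ zʲ / j!` with natural coefficients that are constant on consecutive blocks
`[Eₘ, Eₘ₊₁)` of rapidly increasing length: `0` on the blocks of even index `2k` and `k + 1` on
those of odd index `2k + 1`. Then `f⁽ⁿ⁾ = ∑ cₙ₊ⱼ zʲ / j!`. Deep inside the `k`-th zero block the
first `k` Taylor coefficients of `f⁽ⁿ⁾` vanish and the others are `O(j)`, so `f⁽ⁿ⁾ → 0` locally
uniformly there; inside the `k`-th nonzero block `f⁽ⁿ⁾(0) = k + 1 → ∞`. Each block is much longer
than everything before it, so both sets of indices have upper density one.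

For the growth bound, `cⱼ ≤ j` and `rʲ / j! ≤ 2⁻ʲ` for `j ≥ 6r` bound the tail of
`∑ cⱼ rʲ / j!` by `∑ j 2⁻ʲ = 2`, while the edges `Eₘ` are pushed out so far that `cⱼ + 1 ≤ φ(r)`
for `j < 6r`; together this gives `M∞(f, r) ≤ φ(r) eʳ`.
-/

open Set

theorem udens_eq_one_of_Icc_subset {A : Set ℕ} (m n : ℕ → ℕ) (hm : ∀ k, 1 ≤ m k)
    (hmn : ∀ k, (k + 1) * m k ≤ n k) (hA : ∀ k, Icc (m k) (n k) ⊆ A) : udens A = 1 := by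
  set u : ℕ → ℝ := fun N => ((A ∩ Icc 1 N).ncard : ℝ) / N
  have card_le (N : ℕ) : (A ∩ Icc 1 N).ncard ≤ N := by
    calc (A ∩ Icc 1 N).ncard ≤ (Icc 1 N).ncard :=
          ncard_le_ncard inter_subset_right (finite_Icc _ _)
      _ = N := by rw [← Finset.coe_Icc, ncard_coe_finset, Nat.card_Icc, Nat.add_sub_cancel]
  have hu_le (N : ℕ) : u N ≤ 1 := div_le_one_of_le₀ (by exact_mod_cast card_le N) N.cast_nonneg
  have hu_n (k : ℕ) : (k : ℝ) / (k + 1) ≤ u (n k) := by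
    have hn : 0 < n k := by nlinarith [hm k, hmn k]
    have hcard : n k + 1 ≤ (A ∩ Icc 1 (n k)).ncard + m k := by
      have : (Icc (m k) (n k)).ncard ≤ (A ∩ Icc 1 (n k)).ncard :=
        ncard_le_ncard (fun x hx => ⟨hA k hx, (hm k).trans hx.1, hx.2⟩)
          ((finite_Icc _ _).inter_of_right A)
      rw [← Finset.coe_Icc, ncard_coe_finset, Nat.card_Icc] at this
      omega
    have key : k * n k ≤ (A ∩ Icc 1 (n k)).ncard * (k + 1) := by nlinarith [hmn k]
    rw [div_le_div_iff₀ (by positivity) (by exact_mod_cast hn)]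
    exact_mod_cast key
  have hn_tendsto : Tendsto n atTop atTop :=
    tendsto_atTop_mono (fun k => by nlinarith [hm k, hmn k]) (tendsto_add_atTop_nat 1)
  have hcobdd : IsCoboundedUnder (· ≤ ·) atTop u :=
    (isBoundedUnder_of ⟨0, fun N => by positivity⟩).isCoboundedUnder_le
  refine le_antisymm (limsup_le_of_le hcobdd (.of_forall hu_le)) ?_
  refine le_of_tendsto' (tendsto_natCast_div_add_atTop (1 : ℝ)) fun K => ?_
  refine le_limsup_of_frequently_le (hn_tendsto.frequently ?_) (isBoundedUnder_of ⟨1, hu_le⟩)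
  refine (eventually_ge_atTop K).frequently.mono fun k hk => (hu_n k).trans' ?_
  have hKk : (K : ℝ) ≤ k := by exact_mod_cast hk
  rw [div_le_div_iff₀ (by positivity) (by positivity)]
  linarith

theorem Minf_le_of_forall_norm_le {f : ℂ → ℂ} {r b : ℝ} (hb : 0 ≤ b)
    (h : ∀ z : ℂ, ‖z‖ = r → ‖f z‖ ≤ b) : Minf f r ≤ b :=
  Real.sSup_le (by rintro _ ⟨z, hz, rfl⟩; exact h z (mem_sphere_zero_iff_norm.1 hz)) hb

section Egf

open Nat

theorem Real.tsum_pow_div_factorial (r : ℝ) : ∑' j : ℕ, r ^ j / j ! = Real.exp r := by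
  rw [Real.exp_eq_exp_ℝ, NormedSpace.exp_eq_tsum_div]

theorem pow_div_factorial_le_half_pow {r : ℝ} (hr : 0 ≤ r) {j : ℕ} (hj : 6 * r ≤ j) :
    r ^ j / j ! ≤ (1 / 2) ^ j := by
  calc r ^ j / j ! ≤ ((j : ℝ) / 6) ^ j / j ! := by gcongr; linarith
    _ = (j : ℝ) ^ j / j ! * (1 / 6) ^ j := by rw [div_pow, div_pow, one_pow]; ring
    _ ≤ Real.exp j * (1 / 6) ^ j := by
        gcongr; exact Real.pow_div_factorial_le_exp _ j.cast_nonneg j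
    _ = (Real.exp 1 / 6) ^ j := by rw [← Real.exp_one_pow, div_pow, div_pow]; ring
    _ ≤ (1 / 2) ^ j := pow_le_pow_left₀ (by positivity) (by linarith [Real.exp_one_lt_d9]) j

noncomputable def egf (a : ℕ → ℂ) (z : ℂ) : ℂ := ∑' j, a j * z ^ j / j !

namespace egf

variable {a : ℕ → ℂ} {C ρ : ℝ}

theorem norm_term (c z : ℂ) (j : ℕ) : ‖c * z ^ j / (j ! : ℂ)‖ = ‖c‖ * ‖z‖ ^ j / j ! := by
  rw [norm_div, norm_mul, norm_pow, Complex.norm_natCast]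

theorem summable_norm_mul_pow (ha : ∀ j, ‖a j‖ ≤ C * ρ ^ j) {r : ℝ} (hr : 0 ≤ r) :
    Summable fun j => ‖a j‖ * r ^ j / j ! := by
  refine .of_nonneg_of_le (fun j => by positivity) (fun j => ?_)
    ((Real.summable_pow_div_factorial (ρ * r)).mul_left C)
  calc ‖a j‖ * r ^ j / j ! ≤ C * ρ ^ j * r ^ j / j ! := by gcongr; exact ha j
    _ = C * ((ρ * r) ^ j / j !) := by ring

theorem summable_norm (ha : ∀ j, ‖a j‖ ≤ C * ρ ^ j) (z : ℂ) :
    Summable fun j => ‖a j * z ^ j / (j ! : ℂ)‖ := by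
  simpa only [norm_term] using summable_norm_mul_pow ha (norm_nonneg z)

theorem norm_le (ha : ∀ j, ‖a j‖ ≤ C * ρ ^ j) {r : ℝ} {z : ℂ} (hz : ‖z‖ ≤ r) :
    ‖egf a z‖ ≤ ∑' j, ‖a j‖ * r ^ j / j ! :=
  (norm_tsum_le_tsum_norm (summable_norm ha z)).trans <|
    (summable_norm ha z).tsum_le_tsum (fun j => by rw [norm_term]; gcongr)
      (summable_norm_mul_pow ha ((norm_nonneg z).trans hz))

theorem norm_le_tsum_nat_add (ha : ∀ j, ‖a j‖ ≤ C * ρ ^ j) {N : ℕ} (hzero : ∀ j < N, a j = 0)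
    {r : ℝ} {z : ℂ} (hz : ‖z‖ ≤ r) :
    ‖egf a z‖ ≤ ∑' j, C * ρ ^ (j + N) * r ^ (j + N) / (j + N)! := by
  have hr : 0 ≤ r := (norm_nonneg z).trans hz
  have hsum := summable_norm_mul_pow ha hr
  have hhead : ∑ j ∈ Finset.range N, ‖a j‖ * r ^ j / j ! = 0 :=
    Finset.sum_eq_zero fun j hj => by
      rw [hzero j (Finset.mem_range.1 hj), norm_zero, zero_mul, zero_div]
  have hbound : Summable fun j => C * ρ ^ (j + N) * r ^ (j + N) / (j + N)! := by
    refine (summable_nat_add_iff (f := fun j => C * ρ ^ j * r ^ j / j !) N).2 ?_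
    simpa only [mul_pow, mul_div_assoc, mul_assoc] using
      (Real.summable_pow_div_factorial (ρ * r)).mul_left C
  refine (norm_le ha hz).trans ?_
  rw [← hsum.sum_add_tsum_nat_add N, hhead, zero_add]
  refine Summable.tsum_le_tsum (fun j => ?_) ((summable_nat_add_iff N).2 hsum) hbound
  gcongr
  exact ha _

theorem zero_apply (a : ℕ → ℂ) : egf a 0 = a 0 := by
  rw [egf, tsum_eq_single 0 fun j hj => by rw [zero_pow hj, mul_zero, zero_div]]
  simp

theorem hasDerivAt (ha : ∀ j, ‖a j‖ ≤ C * ρ ^ j) (z : ℂ) :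
    HasDerivAt (egf a) (egf (fun j => a (j + 1)) z) z := by
  have ha' : ∀ j, ‖a (j + 1)‖ ≤ C * ρ * ρ ^ j := fun j => (ha (j + 1)).trans_eq (by ring)
  have hshift : egf a = fun y => a 0 + ∑' j, a (j + 1) * y ^ (j + 1) / ((j + 1)! : ℂ) := by
    funext y
    rw [egf, (summable_norm ha y).of_norm.tsum_eq_zero_add, pow_zero, Nat.factorial_zero,
      Nat.cast_one, mul_one, div_one]
  rw [hshift]
  refine HasDerivAt.const_add _ ?_
  set R := ‖z‖ + 1
  have hz : z ∈ Metric.ball (0 : ℂ) R := mem_ball_zero_iff.2 (lt_add_one _)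
  have hsum0 : Summable fun j => a (j + 1) * z ^ (j + 1) / ((j + 1)! : ℂ) :=
    (summable_nat_add_iff (f := fun j => a j * z ^ j / (j ! : ℂ)) 1).2 (summable_norm ha z).of_norm
  refine hasDerivAt_tsum_of_isPreconnected (g' := fun j y => a (j + 1) * y ^ j / (j ! : ℂ))
    (summable_norm_mul_pow ha' (by positivity : 0 ≤ R)) Metric.isOpen_ball
    (convex_ball 0 R).isPreconnected (fun j y _ => ?_) (fun j y hy => ?_) hz hsum0 hz
  · refine (((hasDerivAt_pow (j + 1) y).const_mul (a (j + 1))).div_const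
      ((j + 1)! : ℂ)).congr_deriv ?_
    rw [Nat.factorial_succ, Nat.cast_mul, Nat.cast_succ, Nat.add_sub_cancel]
    field_simp
  · rw [norm_term]
    gcongr
    exact (mem_ball_zero_iff.1 hy).le

theorem differentiable (ha : ∀ j, ‖a j‖ ≤ C * ρ ^ j) : Differentiable ℂ (egf a) :=
  fun z => (hasDerivAt ha z).differentiableAt

theorem iteratedDeriv_eq (ha : ∀ j, ‖a j‖ ≤ C * ρ ^ j) (n : ℕ) :
    iteratedDeriv n (egf a) = egf fun j => a (n + j) := by
  induction n with
  | zero => simp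
  | succ n ih =>
    have ha_n : ∀ j, ‖a (n + j)‖ ≤ C * ρ ^ n * ρ ^ j := fun j => by
      rw [mul_assoc, ← pow_add]; exact ha _
    funext z
    rw [iteratedDeriv_succ, ih, (hasDerivAt ha_n z).deriv]
    simp only [add_assoc, add_comm 1]

theorem tendstoLocallyUniformly_zero {ι : Type*} {l : Filter ι} {c : ι → ℕ → ℂ}
    (hbound : ∀ᶠ n in l, ∀ j, ‖c n j‖ ≤ C * ρ ^ j) (hzero : ∀ N, ∀ᶠ n in l, ∀ j < N, c n j = 0) :
    TendstoLocallyUniformly (fun n => egf (c n)) (fun _ => 0) l := by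
  rw [tendstoLocallyUniformly_iff_forall_isCompact]
  intro K hK
  obtain ⟨R, hKR⟩ := hK.isBounded.subset_closedBall 0
  rw [Metric.tendstoUniformlyOn_iff]
  intro ε hε
  obtain ⟨N, hN⟩ := eventually_atTop.1 <|
    (tendsto_sum_nat_add fun j => C * ρ ^ j * R ^ j / j !).eventually_lt_const hε
  filter_upwards [hbound, hzero N] with n hb hz y hy
  rw [_root_.dist_zero_left]
  exact (norm_le_tsum_nat_add hb hz (mem_closedBall_zero_iff.1 (hKR hy))).trans_lt (hN N le_rfl)

theorem norm_le_mul_exp {r L : ℝ} (hr : 1 ≤ r) (ha : ∀ j, ‖a j‖ ≤ j)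
    (hL : ∀ j : ℕ, (j : ℝ) < 6 * r → ‖a j‖ ≤ L) {z : ℂ} (hz : ‖z‖ ≤ r) :
    ‖egf a z‖ ≤ (L + 1) * Real.exp r := by
  have hr0 : 0 ≤ r := zero_le_one.trans hr
  have hL0 : 0 ≤ L := (norm_nonneg _).trans (hL 0 (by simp; linarith))
  have ha' : ∀ j, ‖a j‖ ≤ 1 * 2 ^ j := fun j =>
    (ha j).trans <| by rw [one_mul]; exact_mod_cast j.lt_two_pow_self.le
  have hhalf : ‖(1 / 2 : ℝ)‖ < 1 := by norm_num
  -- the head `j < 6 r` is bounded by `L eʳ`, the tail by `∑ j 2⁻ʲ = 2`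
  have hterm (j : ℕ) : ‖a j‖ * r ^ j / j ! ≤ L * (r ^ j / j !) + j * (1 / 2) ^ j := by
    rw [mul_div_assoc]
    rcases lt_or_ge (j : ℝ) (6 * r) with hj | hj
    · have : ‖a j‖ * (r ^ j / j !) ≤ L * (r ^ j / j !) := by gcongr; exact hL j hj
      linarith [show (0 : ℝ) ≤ j * (1 / 2) ^ j by positivity]
    · have : ‖a j‖ * (r ^ j / j !) ≤ j * (1 / 2) ^ j :=
        mul_le_mul (ha j) (pow_div_factorial_le_half_pow hr0 hj) (by positivity) j.cast_nonneg
      linarith [show (0 : ℝ) ≤ L * (r ^ j / j !) by positivity]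
  have hsum_exp := (Real.summable_pow_div_factorial r).mul_left L
  have hsum_geom : Summable fun j : ℕ => (j : ℝ) * (1 / 2) ^ j := by
    simpa using summable_pow_mul_geometric_of_norm_lt_one 1 hhalf
  calc ‖egf a z‖ ≤ ∑' j, ‖a j‖ * r ^ j / j ! := norm_le ha' hz
    _ ≤ ∑' j : ℕ, (L * (r ^ j / j !) + j * (1 / 2) ^ j) :=
        Summable.tsum_le_tsum hterm (summable_norm_mul_pow ha' hr0) (hsum_exp.add hsum_geom)
    _ = L * Real.exp r + 2 := by
        rw [hsum_exp.tsum_add hsum_geom, tsum_mul_left, Real.tsum_pow_div_factorial,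
          tsum_coe_mul_geometric_of_norm_lt_one hhalf]
        norm_num
    _ ≤ (L + 1) * Real.exp r := by nlinarith [Real.add_one_le_exp r]

end egf

end Egf

namespace BlockConstruction

variable (g : ℕ → ℕ)

/-- The factor `m + 1` makes each block much longer than all earlier ones together (density one);
the summand `g m` lets the caller push the edges further out (growth). -/
def blockEdge : ℕ → ℕ
  | 0 => 1
  | m + 1 => (m + 1) * (blockEdge m + 1) + g m

theorem le_blockEdge_succ (m : ℕ) : (m + 1) * (blockEdge g m + 1) ≤ blockEdge g (m + 1) :=
  Nat.le_add_right _ _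

theorem le_blockEdge_succ' (m : ℕ) : g m ≤ blockEdge g (m + 1) :=
  Nat.le_add_left _ _

theorem strictMono_blockEdge : StrictMono (blockEdge g) :=
  strictMono_nat_of_lt_succ fun m => (Nat.lt_succ_self _).trans_le <|
    (Nat.le_mul_of_pos_left _ m.succ_pos).trans (le_blockEdge_succ g m)

theorem lt_blockEdge (m : ℕ) : m < blockEdge g m := by
  simpa [blockEdge] using (strictMono_blockEdge g).add_le_nat m 0

theorem add_lt_blockEdge {n k m : ℕ} (hn : n ≤ blockEdge g m - (k + 1)) (hkm : k < m) :
    n + k < blockEdge g m := by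
  have := lt_blockEdge g m
  omega

/-- `blockIdx g j = m + 1` exactly when `blockEdge g m ≤ j < blockEdge g (m + 1)`. -/
def blockIdx (j : ℕ) : ℕ := Nat.find (p := fun m => j < blockEdge g m) ⟨j, lt_blockEdge g j⟩

theorem lt_blockEdge_blockIdx (j : ℕ) : j < blockEdge g (blockIdx g j) :=
  Nat.find_spec (p := fun m => j < blockEdge g m) _

theorem blockIdx_le {j m : ℕ} (h : j < blockEdge g m) : blockIdx g j ≤ m :=
  Nat.find_min' _ h

theorem blockIdx_eq {j m : ℕ} (h₁ : blockEdge g m ≤ j) (h₂ : j < blockEdge g (m + 1)) :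
    blockIdx g j = m + 1 :=
  (Nat.find_eq_iff _).2 ⟨h₂, fun _ hn =>
    not_lt.2 <| ((strictMono_blockEdge g).monotone (Nat.lt_succ_iff.1 hn)).trans h₁⟩

theorem blockEdge_le_of_blockIdx_eq {j m : ℕ} (h : blockIdx g j = m + 1) : blockEdge g m ≤ j :=
  not_lt.1 <| Nat.find_min (p := fun m => j < blockEdge g m) _ (show m < blockIdx g j by omega)

theorem blockIdx_add_le (n i : ℕ) : blockIdx g (n + i) ≤ blockIdx g n + i :=
  blockIdx_le g <| calc
    n + i < blockEdge g (blockIdx g n) + i := by have := lt_blockEdge_blockIdx g n; omega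
    _ ≤ blockEdge g (blockIdx g n + i) := by
        simpa [add_comm] using (strictMono_blockEdge g).add_le_nat i (blockIdx g n)

/-- `0` on the blocks `[blockEdge g (2k), blockEdge g (2k+1))` and `k + 1` on the blocks
`[blockEdge g (2k+1), blockEdge g (2k+2))`. -/
def coeff (j : ℕ) : ℕ := if Even (blockIdx g j) then blockIdx g j / 2 else 0

theorem coeff_le_blockIdx (j : ℕ) : coeff g j ≤ blockIdx g j := by
  unfold coeff; split_ifs <;> omega

theorem coeff_le_self (j : ℕ) : coeff g j ≤ j :=
  (coeff_le_blockIdx g j).trans (blockIdx_le g (lt_blockEdge g j))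

theorem coeff_eq_zero {j k : ℕ} (h₁ : blockEdge g (2 * k) ≤ j)
    (h₂ : j < blockEdge g (2 * k + 1)) : coeff g j = 0 := by
  rw [coeff, blockIdx_eq g h₁ h₂, if_neg (Nat.not_even_two_mul_add_one k)]

theorem coeff_eq {j k : ℕ} (h₁ : blockEdge g (2 * k + 1) ≤ j)
    (h₂ : j < blockEdge g (2 * k + 2)) : coeff g j = k + 1 := by
  rw [coeff, blockIdx_eq g h₁ h₂, if_pos ⟨k + 1, by ring⟩]
  omega

theorem blockEdge_le_of_coeff_eq {j k : ℕ} (h : coeff g j = k + 1) :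
    blockEdge g (2 * k + 1) ≤ j := by
  unfold coeff at h
  split_ifs at h with he
  obtain ⟨m, hm⟩ := he
  exact blockEdge_le_of_blockIdx_eq g (by omega)

theorem coeff_add_le {n k : ℕ} (hn : n < blockEdge g (2 * k + 1)) (j : ℕ) :
    coeff g (n + j) ≤ 2 * k + 1 + j :=
  (coeff_le_blockIdx g _).trans <| (blockIdx_add_le g n j).trans <|
    Nat.add_le_add_right (blockIdx_le g hn) j

def vanishingSet : Set ℕ :=
  ⋃ k, Icc (blockEdge g (2 * k)) (blockEdge g (2 * k + 1) - (k + 1))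

def plateauSet : Set ℕ :=
  ⋃ k, Icc (blockEdge g (2 * k + 1)) (blockEdge g (2 * k + 2) - (k + 1))

theorem udens_iUnion_Icc_blockEdge (i : ℕ → ℕ) (hi : ∀ k, k ≤ i k) :
    udens (⋃ k, Icc (blockEdge g (i k)) (blockEdge g (i k + 1) - (k + 1))) = 1 := by
  refine udens_eq_one_of_Icc_subset _ _ (fun k => (lt_blockEdge g (i k)).trans_le' (Nat.zero_le _))
    (fun k => ?_) (fun k => subset_iUnion (fun k => Icc (blockEdge g (i k)) _) k)
  have h := (Nat.mul_le_mul_right (blockEdge g (i k) + 1) (Nat.add_le_add_right (hi k) 1)).trans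
    (le_blockEdge_succ g (i k))
  rw [Nat.mul_add, mul_one] at h
  omega

theorem udens_vanishingSet : udens (vanishingSet g) = 1 :=
  udens_iUnion_Icc_blockEdge g (2 * ·) fun k => by omega

theorem udens_plateauSet : udens (plateauSet g) = 1 :=
  udens_iUnion_Icc_blockEdge g (2 * · + 1) fun k => by omega

theorem coeff_add_eq_zero_of_mem_vanishingSet {n : ℕ} (hn : n ∈ vanishingSet g) :
    ∃ k, (∀ j ≤ k, coeff g (n + j) = 0) ∧ n < blockEdge g (2 * k + 1) := by
  obtain ⟨k, hk₁, hk₂⟩ := mem_iUnion.1 hn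
  have hlt := add_lt_blockEdge g hk₂ (by omega)
  exact ⟨k, fun j hj => coeff_eq_zero g (hk₁.trans (Nat.le_add_right n j)) (by omega), by omega⟩

theorem coeff_eq_of_mem_plateauSet {n : ℕ} (hn : n ∈ plateauSet g) :
    ∃ k, coeff g n = k + 1 ∧ n < blockEdge g (2 * k + 2) := by
  obtain ⟨k, hk₁, hk₂⟩ := mem_iUnion.1 hn
  have hlt : n < blockEdge g (2 * k + 2) := by have := add_lt_blockEdge g hk₂ (by omega); omega
  exact ⟨k, coeff_eq g hk₁ hlt, hlt⟩

noncomputable def blockFun : ℂ → ℂ := egf fun j => (coeff g j : ℂ)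

theorem norm_coeff_le (j : ℕ) : ‖(coeff g j : ℂ)‖ ≤ j := by
  rw [Complex.norm_natCast]; exact_mod_cast coeff_le_self g j

theorem norm_coeff_le_two_pow (j : ℕ) : ‖(coeff g j : ℂ)‖ ≤ 1 * 2 ^ j :=
  (norm_coeff_le g j).trans <| by rw [one_mul]; exact_mod_cast j.lt_two_pow_self.le

theorem differentiable_blockFun : Differentiable ℂ (blockFun g) :=
  egf.differentiable (norm_coeff_le_two_pow g)

theorem iteratedDeriv_blockFun (n : ℕ) :
    iteratedDeriv n (blockFun g) = egf fun j => (coeff g (n + j) : ℂ) :=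
  egf.iteratedDeriv_eq (norm_coeff_le_two_pow g) n

theorem tendstoLocallyUniformly_iteratedDeriv_blockFun :
    TendstoLocallyUniformly (fun n z => iteratedDeriv n (blockFun g) z) (fun _ => 0)
      (atTop ⊓ 𝓟 (vanishingSet g)) := by
  simp only [iteratedDeriv_blockFun]
  refine egf.tendstoLocallyUniformly_zero (C := 3) (ρ := 2) ?_ fun N => ?_
  · refine eventually_inf_principal.2 <| .of_forall fun n hn j => ?_
    obtain ⟨k, hzero, hlt⟩ := coeff_add_eq_zero_of_mem_vanishingSet g hn
    rw [Complex.norm_natCast]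
    rcases le_or_gt j k with hj | hj
    · rw [hzero j hj, Nat.cast_zero]; positivity
    · have h2j : (j : ℝ) ≤ 2 ^ j := by exact_mod_cast j.lt_two_pow_self.le
      have hle : (coeff g (n + j) : ℝ) ≤ 2 * k + 1 + j := by exact_mod_cast coeff_add_le g hlt j
      have hkj : (k : ℝ) + 1 ≤ j := by exact_mod_cast hj
      linarith
  · rw [eventually_inf_principal]
    filter_upwards [eventually_ge_atTop (blockEdge g (2 * N))] with n hn hmem j hj
    obtain ⟨k, hzero, hlt⟩ := coeff_add_eq_zero_of_mem_vanishingSet g hmem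
    have hNk := (strictMono_blockEdge g).lt_iff_lt.1 (hn.trans_lt hlt)
    rw [hzero j (by omega), Nat.cast_zero]

theorem tendsto_coeff_plateauSet : Tendsto (coeff g) (atTop ⊓ 𝓟 (plateauSet g)) atTop := by
  refine tendsto_atTop.2 fun K => eventually_inf_principal.2 ?_
  filter_upwards [eventually_ge_atTop (blockEdge g (2 * K))] with n hn hmem
  obtain ⟨k, hk, hlt⟩ := coeff_eq_of_mem_plateauSet g hmem
  have hKk := (strictMono_blockEdge g).lt_iff_lt.1 (hn.trans_lt hlt)
  omega

theorem tendsto_sSup_norm_iteratedDeriv_blockFun (m : ℕ) :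
    Tendsto (fun n => sSup ((fun z => ‖iteratedDeriv n (blockFun g) z‖) ''
      Metric.closedBall (0 : ℂ) m)) (atTop ⊓ 𝓟 (plateauSet g)) atTop := by
  refine tendsto_atTop_mono (fun n => ?_)
    (tendsto_natCast_atTop_atTop.comp (tendsto_coeff_plateauSet g))
  have hcont := ((differentiable_blockFun g).contDiff (n := ⊤)).continuous_iteratedDeriv n le_top
  refine le_csSup ((isCompact_closedBall _ _).bddAbove_image hcont.norm.continuousOn)
    ⟨0, Metric.mem_closedBall_self m.cast_nonneg, ?_⟩
  simp [iteratedDeriv_blockFun, egf.zero_apply]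

theorem coeff_le_sub_one {φ : ℝ → ℝ}
    (hg : ∀ (k : ℕ) (s : ℝ), (g (2 * k) : ℝ) < 6 * s → (k : ℝ) + 2 ≤ φ s)
    {r : ℝ} (hr : (g 0 : ℝ) < 6 * r) {j : ℕ} (hj : (j : ℝ) < 6 * r) :
    (coeff g j : ℝ) ≤ φ r - 1 := by
  obtain h | ⟨k, h⟩ : coeff g j = 0 ∨ ∃ k, coeff g j = k + 1 := by
    cases coeff g j <;> simp
  · have := hg 0 r (by simpa using hr)
    rw [h]; push_cast; linarith
  · have hle : (g (2 * k) : ℝ) ≤ j := by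
      exact_mod_cast (le_blockEdge_succ' g (2 * k)).trans (blockEdge_le_of_coeff_eq g h)
    have := hg k r (by linarith)
    rw [h]; push_cast; linarith

theorem norm_blockFun_le {φ : ℝ → ℝ}
    (hg : ∀ (k : ℕ) (s : ℝ), (g (2 * k) : ℝ) < 6 * s → (k : ℝ) + 2 ≤ φ s)
    {r : ℝ} (hr₁ : 1 ≤ r) (hr : (g 0 : ℝ) < 6 * r) {z : ℂ} (hz : ‖z‖ ≤ r) :
    ‖blockFun g z‖ ≤ φ r * Real.exp r := by
  have := egf.norm_le_mul_exp hr₁ (norm_coeff_le g)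
    (fun j hj => (Complex.norm_natCast _).trans_le (coeff_le_sub_one g hg hr hj)) hz
  rwa [sub_add_cancel] at this

end BlockConstruction

open BlockConstruction

theorem stmt3_general (φ : ℝ → ℝ) (hφ : Tendsto φ atTop atTop) :
    ∃ f : ℂ → ℂ, Differentiable ℂ f ∧ DDistIrregular f ∧
      ∀ᶠ r in atTop, Minf f r ≤ φ r * Real.exp r := by
  obtain ⟨T, hT⟩ : ∃ T : ℕ → ℕ, ∀ (k : ℕ) (r : ℝ), (T k : ℝ) ≤ r → (k : ℝ) + 2 ≤ φ r := by
    choose T hT using fun k : ℕ => eventually_atTop.1 (hφ.eventually_ge_atTop ((k : ℝ) + 2))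
    exact ⟨fun k => ⌈T k⌉₊, fun k r hr => hT k r ((Nat.le_ceil _).trans hr)⟩
  set g : ℕ → ℕ := fun m => 6 * T (m / 2)
  have hg (k : ℕ) (r : ℝ) (hr : (g (2 * k) : ℝ) < 6 * r) : (k : ℝ) + 2 ≤ φ r := by
    simp only [g, Nat.mul_div_cancel_left k two_pos] at hr
    push_cast at hr
    exact hT k r (by linarith)
  refine ⟨blockFun g, differentiable_blockFun g,
    ⟨⟨_, udens_vanishingSet g, tendstoLocallyUniformly_iteratedDeriv_blockFun g⟩,
      ⟨1, _, udens_plateauSet g, tendsto_sSup_norm_iteratedDeriv_blockFun g 1⟩⟩, ?_⟩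
  filter_upwards [eventually_gt_atTop (max 1 (T 0 : ℝ))] with r hr
  have hr₁ : 1 ≤ r := (le_max_left _ _).trans hr.le
  have hr₀ : (g 0 : ℝ) < 6 * r := by
    simp only [g]; push_cast; linarith [le_max_right 1 (T 0 : ℝ)]
  exact Minf_le_of_forall_norm_le (by have := hg 0 r hr₀; positivity)
    fun z hz => norm_blockFun_le g hg hr₁ hr₀ hz.le

theorem stmt3 (φ : ℝ → ℝ) (hφpos : ∀ r > (0 : ℝ), 0 < φ r) (hφ : Tendsto φ atTop atTop) :
    ∃ f : ℂ → ℂ, Differentiable ℂ f ∧ DDistIrregular f ∧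
      ∀ᶠ r in atTop, Minf f r ≤ φ r * Real.exp r :=
  stmt3_general φ hφ
end

section
/- Let X be a Banach space, T : X → X a bounded linear operator, and x ∈ X a vector whose T-orbit is distributionally unbounded, i.e. there exists B ⊂ ℕ with udens(B) = 1 such that ‖T^n x‖ → ∞ along n ∈ B. Then limsup_{N→∞} (1/N) ∑_{j=0}^N ‖T^j x‖ = ∞. In particular, an absolutely Cesàro bounded operator admits no vector with distributionally unbounded orbit. -/
/-!
If `B` has positive upper density `d`, then for infinitely many `N` more than `d N / 2` of the
indices `1, …, N` lie in `B`, and all but a fixed finite number of them carry `‖T^j x‖ ≥ K`.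
The Cesàro sum up to such an `N` is therefore at least about `K d N / 4`, and `K` is arbitrary.
Absolute Cesàro boundedness would instead bound all these averages by `(1 + C) ‖x‖`.
-/

open Filter

theorem frequently_mul_lt_ncard_of_lt_udens {A : Set ℕ} {r : ℝ} (hr : r < udens A) :
    ∃ᶠ n in atTop, r * n < (A ∩ Set.Icc 1 n).ncard := by
  have hfreq : ∃ᶠ n : ℕ in atTop, r < (A ∩ Set.Icc 1 n).ncard / (n : ℝ) :=
    frequently_lt_of_lt_limsup (isCoboundedUnder_le_of_le atTop fun _ => by positivity) hr
  refine (hfreq.and_eventually (eventually_gt_atTop 0)).mono fun n ⟨hn, hpos⟩ => ?_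
  rwa [lt_div_iff₀ (by exact_mod_cast hpos)] at hn

theorem mul_ncard_sub_le_sum_range {f : ℕ → ℝ} (hf : ∀ j, 0 ≤ f j) {B : Set ℕ} {K : ℝ}
    (hK : 0 ≤ K) {N₀ : ℕ} (hfK : ∀ j ≥ N₀, j ∈ B → K ≤ f j) (n : ℕ) :
    K * ((B ∩ Set.Icc 1 n).ncard - N₀) ≤ ∑ j ∈ Finset.range (n + 1), f j := by
  classical
  set F := (Finset.Icc 1 n).filter (· ∈ B)
  have hF : B ∩ Set.Icc 1 n = F := by ext; simp [F]; tauto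
  have hsmall : (F.filter (¬ N₀ ≤ ·)).card ≤ N₀ :=
    (Finset.card_le_card fun j hj => by simp at hj ⊢; omega).trans (Finset.card_range N₀).le
  have hcard : ((B ∩ Set.Icc 1 n).ncard : ℝ) - N₀ ≤ (F.filter (N₀ ≤ ·)).card := by
    rw [hF, Set.ncard_coe_finset, ← Finset.card_filter_add_card_filter_not (p := (N₀ ≤ ·))]
    push_cast
    linarith [(Nat.cast_le (α := ℝ)).2 hsmall]
  calc K * ((B ∩ Set.Icc 1 n).ncard - N₀) ≤ (F.filter (N₀ ≤ ·)).card * K := by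
        rw [mul_comm]; exact mul_le_mul_of_nonneg_right hcard hK
    _ ≤ ∑ j ∈ F.filter (N₀ ≤ ·), f j := by
        rw [← nsmul_eq_mul]
        exact Finset.card_nsmul_le_sum _ _ _ fun j hj => by
          simp only [F, Finset.mem_filter] at hj; exact hfK j hj.2 hj.1.2
    _ ≤ ∑ j ∈ Finset.range (n + 1), f j :=
        Finset.sum_le_sum_of_subset_of_nonneg
          (fun j hj => by simp [F] at hj ⊢; omega) fun j _ _ => hf j

theorem frequently_le_inv_mul_sum_range_of_tendsto {f : ℕ → ℝ} (hf : ∀ j, 0 ≤ f j) {B : Set ℕ}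
    (hB : 0 < udens B) (hfB : Tendsto f (atTop ⊓ 𝓟 B) atTop) (M : ℝ) :
    ∃ᶠ N : ℕ in atTop, M ≤ (N : ℝ)⁻¹ * ∑ j ∈ Finset.range (N + 1), f j := by
  set d := udens B
  set c := max M 0
  -- Frequently `d n / 2` indices of `B` up to `n`, at most `d n / 4` of them below `N₀`.
  obtain ⟨N₀, hN₀⟩ := eventually_atTop.1
    (eventually_inf_principal.1 (hfB.eventually_ge_atTop (4 * c / d)))
  have hlarge : ∀ᶠ n : ℕ in atTop, 0 < n ∧ 4 * N₀ / d ≤ n :=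
    (eventually_gt_atTop 0).and (tendsto_natCast_atTop_atTop.eventually_ge_atTop _)
  refine ((frequently_mul_lt_ncard_of_lt_udens (half_lt_self hB)).and_eventually hlarge).mono ?_
  rintro n ⟨hdens, hpos, hn⟩
  have hnR : (0 : ℝ) < n := by exact_mod_cast hpos
  have hN₀n : (N₀ : ℝ) ≤ d * n / 4 := by rw [div_le_iff₀ hB] at hn; linarith
  have hsum := mul_ncard_sub_le_sum_range hf (by positivity) hN₀ n
  have hcn : c * n ≤ ∑ j ∈ Finset.range (n + 1), f j := calc
    c * n = 4 * c / d * (d * n / 2 - d * n / 4) := by field_simp; ring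
    _ ≤ 4 * c / d * ((B ∩ Set.Icc 1 n).ncard - N₀) := by gcongr; linarith
    _ ≤ _ := hsum
  calc M ≤ c := le_max_left M 0
    _ = (n : ℝ)⁻¹ * (c * n) := by field_simp
    _ ≤ _ := by gcongr

theorem EReal.limsup_coe_eq_top_of_forall_frequently_le {u : ℕ → ℝ}
    (h : ∀ M : ℝ, ∃ᶠ n in atTop, M ≤ u n) : limsup (fun n => (u n : EReal)) atTop = ⊤ := by
  refine EReal.eq_top_iff_forall_lt _ |>.2 fun y => ?_
  exact (EReal.coe_lt_coe_iff.2 (lt_add_one y)).trans_le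
    (le_limsup_of_frequently_le' ((h (y + 1)).mono fun n hn => EReal.coe_le_coe_iff.2 hn))

theorem inv_mul_sum_range_succ_le {f : ℕ → ℝ} (hf : 0 ≤ f 0) {N : ℕ} (hN : 1 ≤ N) :
    (N : ℝ)⁻¹ * ∑ j ∈ Finset.range (N + 1), f j ≤ f 0 + 1 / N * ∑ j ∈ Finset.Icc 1 N, f j := by
  rw [Nat.range_succ_eq_Icc_zero, Finset.Icc_eq_cons_Ioc N.zero_le, Finset.sum_cons,
    ← Finset.Icc_add_one_left_eq_Ioc, zero_add, mul_add, one_div]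
  gcongr
  exact mul_le_of_le_one_left hf (inv_le_one_of_one_le₀ (by exact_mod_cast hN))

theorem stmt17_general (X : Type*) [NormedAddCommGroup X] [NormedSpace ℝ X]
    (T : X →L[ℝ] X) (x : X)
    (hx : ∃ B : Set ℕ, udens B = 1 ∧
      Tendsto (fun n : ℕ => ‖(⇑T)^[n] x‖) (atTop ⊓ 𝓟 B) atTop) :
    Filter.limsup
        (fun N : ℕ =>
          (((N : ℝ)⁻¹ * ∑ j ∈ Finset.range (N + 1), ‖(⇑T)^[j] x‖ : ℝ) : EReal))
        atTop = ⊤ ∧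
      ¬ ∃ C : ℝ, 0 < C ∧ ∀ y : X, ∀ n : ℕ, 0 < n →
        (1 / (n : ℝ)) * ∑ j ∈ Finset.Icc 1 n, ‖(⇑T)^[j] y‖ ≤ C * ‖y‖ := by
  obtain ⟨B, hB, hT⟩ := hx
  have hfreq := frequently_le_inv_mul_sum_range_of_tendsto (fun _ => norm_nonneg _)
    (hB ▸ one_pos) hT
  refine ⟨EReal.limsup_coe_eq_top_of_forall_frequently_le hfreq, ?_⟩
  rintro ⟨C, -, hC⟩
  obtain ⟨N, hN, hN1⟩ :=
    ((hfreq (‖x‖ + C * ‖x‖ + 1)).and_eventually (eventually_ge_atTop 1)).exists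
  have havg := inv_mul_sum_range_succ_le (f := fun j => ‖(⇑T)^[j] x‖) (norm_nonneg x) hN1
  rw [Function.iterate_zero_apply] at havg
  linarith [hC x N hN1]

/-- a vector with distributionally unbounded orbit has Cesàro
averages of the orbit norms with limsup infinity; in particular the operator is
not absolutely Cesàro bounded. -/
theorem stmt17 (X : Type*) [NormedAddCommGroup X] [NormedSpace ℝ X] [CompleteSpace X]
    (T : X →L[ℝ] X) (x : X)
    (hx : ∃ B : Set ℕ, udens B = 1 ∧
      Tendsto (fun n : ℕ => ‖(⇑T)^[n] x‖) (atTop ⊓ 𝓟 B) atTop) :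
    Filter.limsup
        (fun N : ℕ =>
          (((N : ℝ)⁻¹ * ∑ j ∈ Finset.range (N + 1), ‖(⇑T)^[j] x‖ : ℝ) : EReal))
        atTop = ⊤ ∧
      ¬ ∃ C : ℝ, 0 < C ∧ ∀ y : X, ∀ n : ℕ, 0 < n →
        (1 / (n : ℝ)) * ∑ j ∈ Finset.Icc 1 n, ‖(⇑T)^[j] y‖ ≤ C * ‖y‖ :=
  stmt17_general X T x hx
end
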